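/- For every coalition S ⊆ N there exists an order σ* that is admissible for S, attains the minimum of C_S over all orders admissible for S, and satisfies Smith's rule within each component of S: whenever j, k ∈ S lie in the same component of S with respect to σ* and σ*(j) < σ*(k), one has u_j ≥ u_k. -/

import Mathlib

/-! An exchange argument. Among the finitely many admissible orders take one of minimal cost. If it
broke Smith's rule inside a component, urgency would increase somewhere along the stretch of
positions between the two offending players, hence at two adjacent positions inside the
component. Swapping those two players of `S` overtakes no outsider, so the result is still
admissible, and it changes `C_S` by `w_x p_y - w_y p_x < 0`, contradicting minimality. -/

/-- Completion cost `C_j(σ) = w_j · Σ_{k : σ(k) ≤ σ(j)} p_k` of player `j` under order `σ`. -/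
noncomputable def playerCost {n : ℕ} (p w : Fin n → ℝ) (σ : Equiv.Perm (Fin n)) (j : Fin n) : ℝ :=
  w j * ∑ k ∈ Finset.univ.filter (fun k => σ k ≤ σ j), p k

/-- Total cost `C_S(σ)` of coalition `S` under order `σ`. -/
noncomputable def coalCost {n : ℕ} (p w : Fin n → ℝ) (S : Finset (Fin n))
    (σ : Equiv.Perm (Fin n)) : ℝ :=
  ∑ j ∈ S, playerCost p w σ j

/-- `σ` is admissible for coalition `S` (w.r.t. initial order `σ0`): no player outside `S`
may be overtaken. -/
def Admissible {n : ℕ} (σ0 : Equiv.Perm (Fin n)) (S : Finset (Fin n))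
    (σ : Equiv.Perm (Fin n)) : Prop :=
  ∀ i j : Fin n, i ∉ S → σ0 i ≤ σ0 j → σ i ≤ σ j

/-- The value `v(S) = C_S(σ0) − min{C_S(σ) : σ admissible for S}` of coalition `S`
in the SoSi sequencing game. -/
noncomputable def sosiValue {n : ℕ} (p w : Fin n → ℝ) (σ0 : Equiv.Perm (Fin n))
    (S : Finset (Fin n)) : ℝ :=
  coalCost p w S σ0 - sInf {c : ℝ | ∃ σ : Equiv.Perm (Fin n), Admissible σ0 S σ ∧ coalCost p w S σ = c}

/-- `j` and `k` lie in the same component of `S` with respect to `σ`: both are in `S` and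
every player positioned (weakly) between them is in `S`. -/
def SameComponent {n : ℕ} (S : Finset (Fin n)) (σ : Equiv.Perm (Fin n)) (j k : Fin n) : Prop :=
  j ∈ S ∧ k ∈ S ∧
    ∀ x : Fin n, min (σ j) (σ k) ≤ σ x → σ x ≤ max (σ j) (σ k) → x ∈ S

open Finset

lemma Equiv.swap_apply_le_swap_apply_iff {α : Type*} [LinearOrder α] {a b c d : α}
    (hcd : c ⋖ d) (h₁ : ¬(a = c ∧ b = d)) (h₂ : ¬(a = d ∧ b = c)) :
    Equiv.swap c d a ≤ Equiv.swap c d b ↔ a ≤ b := by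
  have hc : ∀ {x}, x ≠ c → (c ≤ x ↔ d ≤ x) := fun hx =>
    ⟨fun h => hcd.ge_of_gt (lt_of_le_of_ne h (Ne.symm hx)), hcd.le.trans⟩
  have hd : ∀ {x}, x ≠ d → (x ≤ c ↔ x ≤ d) := fun hx =>
    ⟨(·.trans hcd.le), fun h => hcd.le_of_lt (lt_of_le_of_ne h hx)⟩
  rw [Equiv.swap_apply_def, Equiv.swap_apply_def]
  split_ifs <;> subst_vars <;> simp_all [hcd.lt.ne, hcd.lt.ne']

lemma exists_covBy_lt_of_lt {α β : Type*} [LinearOrder α] [SuccOrder α] [IsSuccArchimedean α]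
    [LinearOrder β] {f : α → β} {a b : α} (hab : a ≤ b) (hf : f a < f b) :
    ∃ c d, c ⋖ d ∧ a ≤ c ∧ d ≤ b ∧ f c < f d := by
  by_contra! h
  have : AntitoneOn f (Set.Icc a b) := antitoneOn_of_succ_le Set.ordConnected_Icc
    fun c hc hcab hscab => h c _ (Order.covBy_succ_of_not_isMax hc) hcab.1 hscab.2
  exact (this ⟨le_rfl, hab⟩ ⟨hab, le_rfl⟩ hab).not_gt hf

section Exchange

variable {n : ℕ} (p w : Fin n → ℝ) (S : Finset (Fin n))

lemma coalCost_eq_sum_sum (σ : Equiv.Perm (Fin n)) :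
    coalCost p w S σ = ∑ j ∈ S, ∑ k, if σ k ≤ σ j then w j * p k else 0 := by
  simp only [coalCost, playerCost, mul_sum, sum_filter, mul_ite, mul_zero]

lemma coalCost_trans_swap (σ : Equiv.Perm (Fin n)) {c d : Fin n} (hcd : c ⋖ d)
    (hc : σ.symm c ∈ S) (hd : σ.symm d ∈ S) :
    coalCost p w S (σ.trans (Equiv.swap c d)) =
      coalCost p w S σ + w (σ.symm c) * p (σ.symm d) - w (σ.symm d) * p (σ.symm c) := by
  set x := σ.symm c
  set y := σ.symm d
  have hxy : x ≠ y := by simp [x, y, hcd.lt.ne]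
  have hterm : ∀ j k,
      (if σ.trans (Equiv.swap c d) k ≤ σ.trans (Equiv.swap c d) j then w j * p k else 0) =
        (if σ k ≤ σ j then w j * p k else 0) + (if j = x ∧ k = y then w x * p y else 0) -
          (if j = y ∧ k = x then w y * p x else 0) := by
    intro j k
    -- only the pairs `(x, y)` and `(y, x)` change their relative order
    by_cases hjk : j = x ∧ k = y
    · obtain ⟨rfl, rfl⟩ := hjk
      simp [x, y, hcd.le, hcd.lt.not_ge, hxy]
    by_cases hkj : j = y ∧ k = x
    · obtain ⟨rfl, rfl⟩ := hkj
      simp [x, y, hcd.le, hcd.lt.not_ge, hxy]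
    have hle := Equiv.swap_apply_le_swap_apply_iff (a := σ k) (b := σ j) hcd
      (fun h => hkj ⟨σ.eq_symm_apply.2 h.2, σ.eq_symm_apply.2 h.1⟩)
      (fun h => hjk ⟨σ.eq_symm_apply.2 h.2, σ.eq_symm_apply.2 h.1⟩)
    simp only [Equiv.trans_apply, hle, hjk, hkj, if_false, add_zero, sub_zero]
  simp only [coalCost_eq_sum_sum, hterm, sum_sub_distrib, sum_add_distrib]
  simp [ite_and, hc, hd]

variable {S}

lemma admissible_self (σ0 : Equiv.Perm (Fin n)) : Admissible σ0 S σ0 :=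
  fun _ _ _ h => h

lemma Admissible.trans_swap {σ0 σ : Equiv.Perm (Fin n)} (hσ : Admissible σ0 S σ) {c d : Fin n}
    (hcd : c ⋖ d) (hc : σ.symm c ∈ S) (hd : σ.symm d ∈ S) :
    Admissible σ0 S (σ.trans (Equiv.swap c d)) := by
  intro i j hi hij
  have hic : σ i ≠ c := fun h => hi (by rwa [← h, Equiv.symm_apply_apply] at hc)
  have hid : σ i ≠ d := fun h => hi (by rwa [← h, Equiv.symm_apply_apply] at hd)
  rw [Equiv.trans_apply, Equiv.trans_apply,
    Equiv.swap_apply_le_swap_apply_iff hcd (fun h => hic h.1) (fun h => hid h.1)]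
  exact hσ i j hi hij

variable (S)

lemma exists_admissible_forall_coalCost_le (σ0 : Equiv.Perm (Fin n)) :
    ∃ σs, Admissible σ0 S σs ∧
      ∀ σ, Admissible σ0 S σ → coalCost p w S σs ≤ coalCost p w S σ := by
  classical
  obtain ⟨σs, hσs, hmin⟩ := exists_min_image (univ.filter (Admissible σ0 S)) (coalCost p w S)
    ⟨σ0, by simpa using admissible_self σ0⟩
  exact ⟨σs, by simpa using hσs, fun σ hσ => hmin σ (by simpa using hσ)⟩

end Exchange

theorem exists_optimal_smith_general {n : ℕ} (p w : Fin n → ℝ) (hp : ∀ i, 0 < p i)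
    (σ0 : Equiv.Perm (Fin n)) (S : Finset (Fin n)) :
    ∃ σs : Equiv.Perm (Fin n), Admissible σ0 S σs ∧
      (∀ σ : Equiv.Perm (Fin n), Admissible σ0 S σ → coalCost p w S σs ≤ coalCost p w S σ) ∧
      ∀ j k : Fin n, SameComponent S σs j k → σs j < σs k → w k / p k ≤ w j / p j := by
  obtain ⟨σs, hadm, hmin⟩ := exists_admissible_forall_coalCost_le p w S σ0
  refine ⟨σs, hadm, hmin, fun j k ⟨_, _, hbetween⟩ hjk => ?_⟩
  by_contra! hsmith
  obtain ⟨c, d, hcd, hjc, hdk, hu⟩ := exists_covBy_lt_of_lt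
    (f := fun m => w (σs.symm m) / p (σs.symm m)) hjk.le (by simpa using hsmith)
  have hmem : ∀ m, σs j ≤ m → m ≤ σs k → σs.symm m ∈ S := fun m hjm hmk =>
    hbetween _ (by simpa [min_eq_left hjk.le]) (by simpa [max_eq_right hjk.le])
  have hc := hmem c hjc (hcd.le.trans hdk)
  have hd := hmem d (hjc.trans hcd.le) hdk
  have hcost := hmin _ (hadm.trans_swap hcd hc hd)
  rw [coalCost_trans_swap p w S σs hcd hc hd] at hcost
  linarith [(div_lt_div_iff₀ (hp _) (hp _)).mp hu]

/-- For every coalition `S` there is an admissible order minimizing `C_S` over all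
admissible orders that also respects Smith's rule within each component of `S`. -/
theorem exists_optimal_smith {n : ℕ} (p w : Fin n → ℝ) (hp : ∀ i, 0 < p i)
    (hw : ∀ i, 0 ≤ w i) (σ0 : Equiv.Perm (Fin n)) (S : Finset (Fin n)) :
    ∃ σs : Equiv.Perm (Fin n), Admissible σ0 S σs ∧
      (∀ σ : Equiv.Perm (Fin n), Admissible σ0 S σ → coalCost p w S σs ≤ coalCost p w S σ) ∧
      ∀ j k : Fin n, SameComponent S σs j k → σs j < σs k → w k / p k ≤ w j / p j :=
  exists_optimal_smith_general p w hp σ0 S
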